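/- In the su(4) Poisson realization, the polynomial C_2 = Σ_{i,α} s_i t_α q_{iα} and the t-independent quartic invariant C^{(004)} = q_{iα} q_{iβ} q_{jα} q_{jβ} (sum over repeated indices) satisfy {C_2, C^{(004)}} = 0. -/
import Mathlib


open MvPolynomial

/-- Index type for the 15 coordinates `s_i`, `t_α`, `q_{iα}` on the dual of `su(4)`. -/
abbrev Su4Idx : Type := Fin 3 ⊕ Fin 3 ⊕ Fin 3 × Fin 3

/-- Polynomials in the 15 coordinates on the dual of `su(4)`. -/
abbrev Su4Poly : Type := MvPolynomial Su4Idx ℂ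

/-- The coordinate `s_i`. -/
noncomputable def sv (i : Fin 3) : Su4Poly := X (Sum.inl i)

/-- The coordinate `t_α`. -/
noncomputable def tv (a : Fin 3) : Su4Poly := X (Sum.inr (Sum.inl a))

/-- The coordinate `q_{iα}`. -/
noncomputable def qv (i a : Fin 3) : Su4Poly := X (Sum.inr (Sum.inr (i, a)))

/-- The Levi-Civita symbol on three indices, with values in `ℂ`. -/
noncomputable def eps (i j k : Fin 3) : ℂ :=
  if i = j ∨ j = k ∨ i = k then 0
  else if (i, j, k) = (0, 1, 2) ∨ (i, j, k) = (1, 2, 0) ∨ (i, j, k) = (2, 0, 1) then 1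
  else -1

/-- The Lie--Poisson brackets of the coordinate functions, encoding the `su(4)` relations
`{s_i,s_j} = i ε_{ijk} s_k`, `{t_α,t_β} = i ε_{αβγ} t_γ`, `{s_i,t_α} = 0`,
`{s_i,q_{jα}} = i ε_{ijk} q_{kα}`, `{t_α,q_{iβ}} = i ε_{αβγ} q_{iγ}`,
`{q_{iα},q_{jβ}} = (i/4)(δ_{αβ} ε_{ijk} s_k + δ_{ij} ε_{αβγ} t_γ)`. -/
noncomputable def coordBracket : Su4Idx → Su4Idx → Su4Poly
  | Sum.inl i, Sum.inl j => ∑ k, C (Complex.I * eps i j k) * sv k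
  | Sum.inl _, Sum.inr (Sum.inl _) => 0
  | Sum.inr (Sum.inl _), Sum.inl _ => 0
  | Sum.inl i, Sum.inr (Sum.inr (j, a)) => ∑ k, C (Complex.I * eps i j k) * qv k a
  | Sum.inr (Sum.inr (j, a)), Sum.inl i => -(∑ k, C (Complex.I * eps i j k) * qv k a)
  | Sum.inr (Sum.inl a), Sum.inr (Sum.inl b) => ∑ c, C (Complex.I * eps a b c) * tv c
  | Sum.inr (Sum.inl a), Sum.inr (Sum.inr (i, b)) =>
      ∑ c, C (Complex.I * eps a b c) * qv i c
  | Sum.inr (Sum.inr (i, b)), Sum.inr (Sum.inl a) =>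
      -(∑ c, C (Complex.I * eps a b c) * qv i c)
  | Sum.inr (Sum.inr (i, a)), Sum.inr (Sum.inr (j, b)) =>
      (∑ k, C (Complex.I / 4 * if a = b then eps i j k else 0) * sv k)
        + ∑ c, C (Complex.I / 4 * if i = j then eps a b c else 0) * tv c

/-- The Lie--Poisson bracket on polynomials in the `su(4)` coordinates. -/
noncomputable def pb (p q : Su4Poly) : Su4Poly :=
  ∑ u : Su4Idx, ∑ v : Su4Idx, coordBracket u v * pderiv u p * pderiv v q

/-- `C₂ = Σ s_i t_α q_{iα}`. -/
noncomputable def C2inv : Su4Poly := ∑ i, ∑ a, sv i * tv a * qv i a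

/-- `D₄ = C⁽⁰⁰⁴⁾ = q_{iα} q_{iβ} q_{jα} q_{jβ}` (sum over repeated indices). -/
noncomputable def D4inv : Su4Poly := ∑ i, ∑ j, ∑ a, ∑ b, qv i a * qv i b * qv j a * qv j b


set_option maxHeartbeats 8000000

lemma dD4s (i : Fin 3) : pderiv (Sum.inl i) D4inv = 0 := by
  fin_cases i <;>
  · simp only [D4inv, qv, Fin.sum_univ_three, Fin.reduceFinMk]
    simp only [map_add, pderiv_mul, pderiv_X, Pi.single_apply, Fin.isValue, Fin.reduceFinMk,
      Sum.inr.injEq, Sum.inl.injEq, Prod.mk.injEq, reduceCtorEq, Fin.reduceEq, and_true, and_false,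
      true_and, false_and, and_self, if_false, if_true, ite_true, ite_false,
      mul_zero, zero_mul, add_zero, zero_add, mul_one, one_mul]

lemma dD4t (a : Fin 3) : pderiv (Sum.inr (Sum.inl a)) D4inv = 0 := by
  fin_cases a <;>
  · simp only [D4inv, qv, Fin.sum_univ_three, Fin.reduceFinMk]
    simp only [map_add, pderiv_mul, pderiv_X, Pi.single_apply, Fin.isValue, Fin.reduceFinMk,
      Sum.inr.injEq, Sum.inl.injEq, Prod.mk.injEq, reduceCtorEq, Fin.reduceEq, and_true, and_false,
      true_and, false_and, and_self, if_false, if_true, ite_true, ite_false,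
      mul_zero, zero_mul, add_zero, zero_add, mul_one, one_mul]

lemma dD4q (m c : Fin 3) : pderiv (Sum.inr (Sum.inr (m, c))) D4inv
    = 4 * ∑ j, ∑ b, qv m b * qv j b * qv j c := by
  fin_cases m <;> fin_cases c <;>
  · simp only [D4inv, qv, Fin.sum_univ_three, Fin.reduceFinMk]
    simp only [map_add, pderiv_mul, pderiv_X, Pi.single_apply, Fin.isValue, Fin.reduceFinMk,
      Sum.inr.injEq, Sum.inl.injEq, Prod.mk.injEq, reduceCtorEq, Fin.reduceEq, and_true, and_false,
      true_and, false_and, and_self, if_false, if_true, ite_true, ite_false,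
      mul_zero, zero_mul, add_zero, zero_add, mul_one, one_mul]
    ring

lemma dC2s (i : Fin 3) : pderiv (Sum.inl i) C2inv = ∑ a, tv a * qv i a := by
  fin_cases i <;>
  · simp only [C2inv, sv, tv, qv, Fin.sum_univ_three, Fin.reduceFinMk]
    simp only [map_add, pderiv_mul, pderiv_X, Pi.single_apply, Fin.isValue, Fin.reduceFinMk,
      Sum.inr.injEq, Sum.inl.injEq, Prod.mk.injEq, reduceCtorEq, Fin.reduceEq, and_true, and_false,
      true_and, false_and, and_self, if_false, if_true, ite_true, ite_false,
      mul_zero, zero_mul, add_zero, zero_add, mul_one, one_mul]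
    try ring

lemma dC2t (a : Fin 3) : pderiv (Sum.inr (Sum.inl a)) C2inv = ∑ i, sv i * qv i a := by
  fin_cases a <;>
  · simp only [C2inv, sv, tv, qv, Fin.sum_univ_three, Fin.reduceFinMk]
    simp only [map_add, pderiv_mul, pderiv_X, Pi.single_apply, Fin.isValue, Fin.reduceFinMk,
      Sum.inr.injEq, Sum.inl.injEq, Prod.mk.injEq, reduceCtorEq, Fin.reduceEq, and_true, and_false,
      true_and, false_and, and_self, if_false, if_true, ite_true, ite_false,
      mul_zero, zero_mul, add_zero, zero_add, mul_one, one_mul]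
    try ring

lemma dC2q (i a : Fin 3) : pderiv (Sum.inr (Sum.inr (i, a))) C2inv = sv i * tv a := by
  fin_cases i <;> fin_cases a <;>
  · simp only [C2inv, sv, tv, qv, Fin.sum_univ_three, Fin.reduceFinMk]
    simp only [map_add, pderiv_mul, pderiv_X, Pi.single_apply, Fin.isValue, Fin.reduceFinMk,
      Sum.inr.injEq, Sum.inl.injEq, Prod.mk.injEq, reduceCtorEq, Fin.reduceEq, and_true, and_false,
      true_and, false_and, and_self, if_false, if_true, ite_true, ite_false,
      mul_zero, zero_mul, add_zero, zero_add, mul_one, one_mul]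
    try ring

lemma partS : (∑ i : Fin 3, ∑ v : Su4Idx,
    coordBracket (Sum.inl i) v * pderiv (Sum.inl i) C2inv * pderiv v D4inv) = 0 := by
  simp only [Fintype.sum_sum_type, Fintype.sum_prod_type, dD4s, dD4t, dD4q, dC2s,
    mul_zero, zero_mul, Finset.sum_const_zero, add_zero, zero_add]
  simp only [coordBracket, eps, sv, tv, qv, Fin.sum_univ_three, Fin.isValue, Fin.reduceFinMk,
      Fin.reduceEq, or_self, or_false, false_or, true_or, or_true,
      Prod.mk.injEq, and_true, and_false, true_and, false_and,
      if_false, if_true, ite_true, ite_false,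
      mul_one, mul_zero, zero_mul, mul_neg_one, map_zero, map_neg, map_mul, map_one,
      add_zero, zero_add, neg_zero, neg_neg, one_mul]
  ring

lemma partT : (∑ a : Fin 3, ∑ v : Su4Idx,
    coordBracket (Sum.inr (Sum.inl a)) v * pderiv (Sum.inr (Sum.inl a)) C2inv
      * pderiv v D4inv) = 0 := by
  simp only [Fintype.sum_sum_type, Fintype.sum_prod_type, dD4s, dD4t, dD4q, dC2t,
    mul_zero, zero_mul, Finset.sum_const_zero, add_zero, zero_add]
  simp only [coordBracket, eps, sv, tv, qv, Fin.sum_univ_three, Fin.isValue, Fin.reduceFinMk,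
      Fin.reduceEq, or_self, or_false, false_or, true_or, or_true,
      Prod.mk.injEq, and_true, and_false, true_and, false_and,
      if_false, if_true, ite_true, ite_false,
      mul_one, mul_zero, zero_mul, mul_neg_one, map_zero, map_neg, map_mul, map_one,
      add_zero, zero_add, neg_zero, neg_neg, one_mul]
  ring

lemma partQ : (∑ p : Fin 3 × Fin 3, ∑ v : Su4Idx,
    coordBracket (Sum.inr (Sum.inr p)) v * pderiv (Sum.inr (Sum.inr p)) C2inv
      * pderiv v D4inv) = 0 := by
  simp only [Fintype.sum_prod_type, Fintype.sum_sum_type, dD4s, dD4t, dD4q, dC2q,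
    mul_zero, zero_mul, Finset.sum_const_zero, add_zero, zero_add]
  simp only [coordBracket, eps, sv, tv, qv, Fin.sum_univ_three, Fin.isValue, Fin.reduceFinMk,
      Fin.reduceEq, or_self, or_false, false_or, true_or, or_true,
      Prod.mk.injEq, and_true, and_false, true_and, false_and,
      if_false, if_true, ite_true, ite_false,
      mul_one, mul_zero, zero_mul, mul_neg_one, map_zero, map_neg, map_mul, map_one,
      add_zero, zero_add, neg_zero, neg_neg, one_mul]
  ring

/-- In the `su(4)` Poisson realization, `{C₂, D₄} = 0`. -/
theorem statement8 : pb C2inv D4inv = 0 := by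
  have h : pb C2inv D4inv =
      (∑ i : Fin 3, ∑ v : Su4Idx,
        coordBracket (Sum.inl i) v * pderiv (Sum.inl i) C2inv * pderiv v D4inv)
      + ((∑ a : Fin 3, ∑ v : Su4Idx,
        coordBracket (Sum.inr (Sum.inl a)) v * pderiv (Sum.inr (Sum.inl a)) C2inv
          * pderiv v D4inv)
      + (∑ p : Fin 3 × Fin 3, ∑ v : Su4Idx,
        coordBracket (Sum.inr (Sum.inr p)) v * pderiv (Sum.inr (Sum.inr p)) C2inv
          * pderiv v D4inv)) := by
    simp only [pb, Fintype.sum_sum_type]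
  rw [h, partS, partT, partQ]
  simp
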